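/- arXiv:2301.06462 — 6 statements merged into one kernel-verified Lean document; each statement's English description precedes it below -/
import Mathlib

section
/- If (g, φ) is a non-abelian quadratic Lie algebra, then g does not admit an abelian complex structure; that is, there is no linear map J : g → g with J² = −id and [Jx, Jy] = [x, y] for all x, y ∈ g. -/
open TensorProduct

/-- A pseudo-Hermitian quadratic Lie algebra structure on a real vector space `V`:
`br` is a Lie bracket, `J` is an integrable complex structure, and `φ` is a
nondegenerate symmetric invariant bilinear form compatible with `J`. -/
structure IsPHQ (V : Type*) [AddCommGroup V] [Module ℝ V]
    (br : V → V → V) (J : V → V) (φ : V → V → ℝ) : Prop where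
  br_add_left : ∀ x y z : V, br (x + y) z = br x z + br y z
  br_smul_left : ∀ (c : ℝ) (x z : V), br (c • x) z = c • br x z
  br_skew : ∀ x y : V, br x y = - br y x
  jacobi : ∀ x y z : V, br x (br y z) + br y (br z x) + br z (br x y) = 0
  J_add : ∀ x y : V, J (x + y) = J x + J y
  J_smul : ∀ (c : ℝ) (x : V), J (c • x) = c • J x
  J_sq : ∀ x : V, J (J x) = - x
  integrable : ∀ x y : V, br x y + J (br (J x) y) + J (br x (J y)) - br (J x) (J y) = 0
  phi_add_left : ∀ x y z : V, φ (x + y) z = φ x z + φ y z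
  phi_smul_left : ∀ (c : ℝ) (x y : V), φ (c • x) y = c * φ x y
  phi_symm : ∀ x y : V, φ x y = φ y x
  phi_nondeg : ∀ x : V, (∀ y : V, φ x y = 0) → x = 0
  phi_invariant : ∀ x y z : V, φ (br x y) z + φ y (br x z) = 0
  phi_hermitian : ∀ x y : V, φ (J x) (J y) = φ x y

/-- Equivalence of pseudo-Hermitian quadratic Lie algebras: a linear isomorphism
intertwining the brackets and the complex structures and preserving the metrics. -/
def PHQEquiv {V W : Type*} [AddCommGroup V] [Module ℝ V] [AddCommGroup W] [Module ℝ W]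
    (brV : V → V → V) (JV : V → V) (φV : V → V → ℝ)
    (brW : W → W → W) (JW : W → W) (φW : W → W → ℝ) : Prop :=
  ∃ ψ : V ≃ₗ[ℝ] W, (∀ x y, ψ (brV x y) = brW (ψ x) (ψ y)) ∧
    (∀ x, ψ (JV x) = JW (ψ x)) ∧ ∀ x y, φW (ψ x) (ψ y) = φV x y

/-- Lower central series of a subalgebra `W` with respect to a bracket `br`. -/
def lcsW {V : Type*} [AddCommGroup V] [Module ℝ V] (br : V → V → V)
    (W : Submodule ℝ V) : ℕ → Submodule ℝ V
  | 0 => W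
  | n + 1 => Submodule.span ℝ {w : V | ∃ x ∈ lcsW br W n, ∃ y ∈ W, w = br x y}

/-- `φ` has signature `(a, b)`: there is an orthogonal decomposition into a
negative definite subspace of dimension `a` and a positive definite subspace of
dimension `b` (the convention of the paper, where positive definite is `(0, 2n)`). -/
def hasSignature {V : Type*} [AddCommGroup V] [Module ℝ V]
    (φ : V → V → ℝ) (a b : ℕ) : Prop :=
  ∃ N P : Submodule ℝ V, N ⊓ P = ⊥ ∧ N ⊔ P = ⊤ ∧
    (∀ x ∈ N, ∀ y ∈ P, φ x y = 0) ∧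
    (∀ x ∈ N, x ≠ 0 → φ x x < 0) ∧ (∀ x ∈ P, x ≠ 0 → 0 < φ x x) ∧
    Module.finrank ℝ N = a ∧ Module.finrank ℝ P = b

/-- The bracket of the pHQ-double extension `g = ℝz ⊕ ℝz' ⊕ g₀ ⊕ ℝv' ⊕ ℝv`,
with an element `(a, b, x, c, d)` standing for `a·z + b·z' + x + c·v' + d·v`. -/
def extBr {V : Type*} [AddCommGroup V] [Module ℝ V]
    (br₀ : V → V → V) (φ₀ : V → V → ℝ) (D F : V → V) (s₀ : V) :
    (ℝ × ℝ × V × ℝ × ℝ) → (ℝ × ℝ × V × ℝ × ℝ) → (ℝ × ℝ × V × ℝ × ℝ) :=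
  fun P Q =>
    (φ₀ (F P.2.2.1) Q.2.2.1 + P.2.2.2.1 * φ₀ s₀ Q.2.2.1 - Q.2.2.2.1 * φ₀ s₀ P.2.2.1,
     φ₀ (D P.2.2.1) Q.2.2.1 - P.2.2.2.2 * φ₀ s₀ Q.2.2.1 + Q.2.2.2.2 * φ₀ s₀ P.2.2.1,
     br₀ P.2.2.1 Q.2.2.1 + P.2.2.2.2 • F Q.2.2.1 - Q.2.2.2.2 • F P.2.2.1
       + P.2.2.2.1 • D Q.2.2.1 - Q.2.2.2.1 • D P.2.2.1
       + (P.2.2.2.2 * Q.2.2.2.1 - P.2.2.2.1 * Q.2.2.2.2) • s₀,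
     0, 0)

/-- The complex structure of the pHQ-double extension:
`Jz = z'`, `Jz' = -z`, `Jv = v'`, `Jv' = -v`, `Jx = J₀x`. -/
def extJ {V : Type*} [AddCommGroup V] [Module ℝ V] (J₀ : V → V) :
    (ℝ × ℝ × V × ℝ × ℝ) → (ℝ × ℝ × V × ℝ × ℝ) :=
  fun P => (-P.2.1, P.1, J₀ P.2.2.1, P.2.2.2.2, -P.2.2.2.1)

/-- The metric of the pHQ-double extension: `φ(z,v) = φ(z',v') = 1` and `φ₀` on `g₀`. -/
def extPhi {V : Type*} [AddCommGroup V] [Module ℝ V] (φ₀ : V → V → ℝ) :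
    (ℝ × ℝ × V × ℝ × ℝ) → (ℝ × ℝ × V × ℝ × ℝ) → ℝ :=
  fun P Q => P.1 * Q.2.2.2.2 + P.2.2.2.2 * Q.1 + P.2.1 * Q.2.2.2.1 + P.2.2.2.1 * Q.2.1
    + φ₀ P.2.2.1 Q.2.2.1

/-- The data `(D, F, s₀)` needed for a pHQ-double extension of `(g₀, br₀, J₀, φ₀)`:
`D`, `F` are `φ₀`-skewsymmetric derivations with `[F + J₀D, J₀] = 0` and
`[F, D] = ad_{g₀}(s₀)`. -/
def IsPHQDblExtData (V : Type*) [AddCommGroup V] [Module ℝ V]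
    (br₀ : V → V → V) (J₀ : V → V) (φ₀ : V → V → ℝ) (D F : V → V) (s₀ : V) : Prop :=
  (∀ x y, D (x + y) = D x + D y) ∧ (∀ (c : ℝ) (x : V), D (c • x) = c • D x) ∧
  (∀ x y, F (x + y) = F x + F y) ∧ (∀ (c : ℝ) (x : V), F (c • x) = c • F x) ∧
  (∀ x y, φ₀ (D x) y = - φ₀ x (D y)) ∧ (∀ x y, φ₀ (F x) y = - φ₀ x (F y)) ∧
  (∀ x y, D (br₀ x y) = br₀ (D x) y + br₀ x (D y)) ∧
  (∀ x y, F (br₀ x y) = br₀ (F x) y + br₀ x (F y)) ∧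
  (∀ x, F (J₀ x) + J₀ (D (J₀ x)) = J₀ (F x) + J₀ (J₀ (D x))) ∧
  (∀ x, F (D x) - D (F x) = br₀ s₀ x)

/-! ### Concrete models -/

/-- Standard complex structure on `ℝ²`. -/
def j2 : (Fin 2 → ℝ) → (Fin 2 → ℝ) := fun x => ![-x 1, x 0]

/-- Positive definite Hermitian metric on `ℝ²` (the algebra `ℝ^{2,0}`). -/
def phi2 : (Fin 2 → ℝ) → (Fin 2 → ℝ) → ℝ := fun x y => x 0 * y 0 + x 1 * y 1

/-- Complex structure of the 6-dimensional Lie algebra `ℒ`, on the ordered basis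
`x₁, Jx₁, x₂, Jx₂, x₃, Jx₃`. -/
def j6 : (Fin 6 → ℝ) → (Fin 6 → ℝ) := fun x => ![-x 1, x 0, -x 3, x 2, -x 5, x 4]

/-- Bracket of `ℒ`: `[x₁, Jx₁] = x₂`, `[x₁, x₂] = -Jx₃`, `[Jx₁, x₂] = x₃` on the
ordered basis `x₁, Jx₁, x₂, Jx₂, x₃, Jx₃`. -/
def brL : (Fin 6 → ℝ) → (Fin 6 → ℝ) → (Fin 6 → ℝ) := fun x y =>
  ![0, 0, x 0 * y 1 - x 1 * y 0, 0, x 1 * y 2 - x 2 * y 1, -(x 0 * y 2 - x 2 * y 0)]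

/-- The metric of `ℒ^{4,2}`: `φ(x₁,x₃) = φ(Jx₁,Jx₃) = 1`, `φ(x₂,x₂) = φ(Jx₂,Jx₂) = 1`. -/
def phiL : (Fin 6 → ℝ) → (Fin 6 → ℝ) → ℝ := fun x y =>
  x 0 * y 4 + x 4 * y 0 + x 1 * y 5 + x 5 * y 1 + x 2 * y 2 + x 3 * y 3

/-- Complex structure on `ℝ⁸`, ordered basis `x₁, x₂, x₃, x₄, x₁*, x₂*, x₃*, x₄*` with
`Jx₁ = x₂`, `Jx₃ = x₄`, `Jx₁* = x₂*`, `Jx₃* = x₄*`. -/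
def j8 : (Fin 8 → ℝ) → (Fin 8 → ℝ) := fun x =>
  ![-x 1, x 0, -x 3, x 2, -x 5, x 4, -x 7, x 6]

/-- The metric `φ(xᵢ, xⱼ*) = δᵢⱼ` of the `T*`-extensions of the Kodaira–Thurston algebra. -/
def phi8 : (Fin 8 → ℝ) → (Fin 8 → ℝ) → ℝ := fun x y =>
  x 0 * y 4 + x 4 * y 0 + x 1 * y 5 + x 5 * y 1 + x 2 * y 6 + x 6 * y 2
    + x 3 * y 7 + x 7 * y 3

/-- A neutral pseudo-Hermitian metric on abelian `ℝ⁸` (the algebra `ℝ^{4,4}`). -/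
def phi44 : (Fin 8 → ℝ) → (Fin 8 → ℝ) → ℝ := fun x y =>
  x 0 * y 0 + x 1 * y 1 + x 2 * y 2 + x 3 * y 3
    - x 4 * y 4 - x 5 * y 5 - x 6 * y 6 - x 7 * y 7

/-- Bracket of `T*₀k`: `[x₁,x₂] = x₃`, `[x₃*,x₁] = x₂*`, `[x₃*,x₂] = -x₁*`. -/
def brT0 : (Fin 8 → ℝ) → (Fin 8 → ℝ) → (Fin 8 → ℝ) := fun x y =>
  ![0, 0, x 0 * y 1 - x 1 * y 0, 0,
    -(x 6 * y 1 - x 1 * y 6), x 6 * y 0 - x 0 * y 6, 0, 0]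

/-- Bracket of `T*_{θ₃}k`: `[x₁,x₂] = x₃`, `[x₁,x₃] = x₄*`, `[x₁,x₄] = -x₃*`,
`[x₃,x₄] = x₁*`, `[x₃*,x₁] = x₂*`, `[x₃*,x₂] = -x₁*`. -/
def brT3 : (Fin 8 → ℝ) → (Fin 8 → ℝ) → (Fin 8 → ℝ) := fun x y =>
  ![0, 0, x 0 * y 1 - x 1 * y 0, 0,
    (x 2 * y 3 - x 3 * y 2) - (x 6 * y 1 - x 1 * y 6),
    x 6 * y 0 - x 0 * y 6,
    -(x 0 * y 3 - x 3 * y 0),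
    x 0 * y 2 - x 2 * y 0]

/-- Bracket of `T*_{αθ₁}k`: `[x₁,x₂] = x₃ + αx₃*`, `[x₁,x₃] = -αx₂*`, `[x₂,x₃] = αx₁*`,
`[x₃*,x₁] = x₂*`, `[x₃*,x₂] = -x₁*`. -/
def brTal (α : ℝ) : (Fin 8 → ℝ) → (Fin 8 → ℝ) → (Fin 8 → ℝ) := fun x y =>
  ![0, 0, x 0 * y 1 - x 1 * y 0, 0,
    α * (x 1 * y 2 - x 2 * y 1) - (x 6 * y 1 - x 1 * y 6),
    -(α * (x 0 * y 2 - x 2 * y 0)) + (x 6 * y 0 - x 0 * y 6),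
    α * (x 0 * y 1 - x 1 * y 0), 0]

/-- Bracket of the Kodaira–Thurston algebra `k`: `[x₁, x₂] = x₃`. -/
def brK : (Fin 4 → ℝ) → (Fin 4 → ℝ) → (Fin 4 → ℝ) := fun x y =>
  ![0, 0, x 0 * y 1 - x 1 * y 0, 0]

/-- The abelian complex structure of the Kodaira–Thurston algebra:
`Jx₁ = x₂`, `Jx₂ = -x₁`, `Jx₃ = x₄`, `Jx₄ = -x₃`. -/
def jK : (Fin 4 → ℝ) → (Fin 4 → ℝ) := fun x => ![-x 1, x 0, -x 3, x 2]

/-- The dual basis vectors `xᵢ*` of `k*`. -/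
noncomputable def p4 (i : Fin 4) : Module.Dual ℝ (Fin 4 → ℝ) := LinearMap.proj i

/-- The cyclic cocycle `θ₁`. -/
noncomputable def th1 : (Fin 4 → ℝ) → (Fin 4 → ℝ) → Module.Dual ℝ (Fin 4 → ℝ) := fun x y =>
  (x 0 * y 1 - x 1 * y 0) • p4 2 - (x 0 * y 2 - x 2 * y 0) • p4 1
    + (x 1 * y 2 - x 2 * y 1) • p4 0

/-- The cyclic cocycle `θ₂`. -/
noncomputable def th2 : (Fin 4 → ℝ) → (Fin 4 → ℝ) → Module.Dual ℝ (Fin 4 → ℝ) := fun x y =>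
  (x 0 * y 1 - x 1 * y 0) • p4 3 - (x 0 * y 3 - x 3 * y 0) • p4 1
    + (x 1 * y 3 - x 3 * y 1) • p4 0

/-- The cyclic cocycle `θ₃`. -/
noncomputable def th3 : (Fin 4 → ℝ) → (Fin 4 → ℝ) → Module.Dual ℝ (Fin 4 → ℝ) := fun x y =>
  (x 0 * y 2 - x 2 * y 0) • p4 3 - (x 0 * y 3 - x 3 * y 0) • p4 2
    + (x 2 * y 3 - x 3 * y 2) • p4 0

/-- The cyclic cocycle `θ₄`. -/
noncomputable def th4 : (Fin 4 → ℝ) → (Fin 4 → ℝ) → Module.Dual ℝ (Fin 4 → ℝ) := fun x y =>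
  (x 1 * y 2 - x 2 * y 1) • p4 3 - (x 1 * y 3 - x 3 * y 1) • p4 2
    + (x 2 * y 3 - x 3 * y 2) • p4 1

/-- A non-abelian quadratic Lie algebra admits no abelian complex
structure. -/
theorem stmt_0 {g : Type*} [LieRing g] [LieAlgebra ℝ g]
    (φ : g → g → ℝ)
    (hadd : ∀ x y z : g, φ (x + y) z = φ x z + φ y z)
    (hsmul : ∀ (c : ℝ) (x y : g), φ (c • x) y = c * φ x y)
    (hsymm : ∀ x y : g, φ x y = φ y x)
    (hnondeg : ∀ x : g, (∀ y : g, φ x y = 0) → x = 0)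
    (hinv : ∀ x y z : g, φ ⁅x, y⁆ z + φ y ⁅x, z⁆ = 0)
    (hna : ∃ x y : g, ⁅x, y⁆ ≠ 0) :
    ¬ ∃ J : g →ₗ[ℝ] g, (∀ x : g, J (J x) = -x) ∧ ∀ x y : g, ⁅J x, J y⁆ = ⁅x, y⁆ := by
  rintro ⟨J, hJ2, hab⟩
  obtain ⟨x₀, y₀, hxy⟩ := hna
  have hneg : ∀ a b : g, φ (-a) b = - φ a b := fun a b => by
    rw [← neg_one_smul ℝ a, hsmul]; ring
  have sk12 : ∀ x y z : g, φ ⁅x, y⁆ z = - φ ⁅y, x⁆ z := fun x y z => by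
    rw [show ⁅x, y⁆ = -⁅y, x⁆ from (lie_skew x y).symm, hneg]
  have sk23 : ∀ x y z : g, φ ⁅x, y⁆ z = - φ ⁅x, z⁆ y := fun x y z => by
    have h1 := hinv x y z
    have h2 := hsymm y ⁅x, z⁆
    linarith
  have cyc : ∀ x y z : g, φ ⁅x, y⁆ z = φ ⁅y, z⁆ x := fun x y z => by
    rw [sk12, sk23 y x z, neg_neg]
  have h12 : ∀ x y z : g, φ ⁅J x, J y⁆ z = φ ⁅x, y⁆ z := fun x y z => by
    rw [hab]
  have h23 : ∀ x y z : g, φ ⁅x, J y⁆ (J z) = φ ⁅x, y⁆ z := fun x y z =>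
    calc φ ⁅x, J y⁆ (J z) = φ ⁅J y, J z⁆ x := cyc _ _ _
      _ = φ ⁅y, z⁆ x := h12 _ _ _
      _ = φ ⁅x, y⁆ z := (cyc x y z).symm
  have h13 : ∀ x y z : g, φ ⁅J x, y⁆ (J z) = φ ⁅x, y⁆ z := fun x y z =>
    calc φ ⁅J x, y⁆ (J z) = φ ⁅y, J z⁆ (J x) := cyc _ _ _
      _ = φ ⁅J z, J x⁆ y := cyc _ _ _
      _ = φ ⁅z, x⁆ y := h12 _ _ _
      _ = φ ⁅x, y⁆ z := cyc z x y
  have hzero : ∀ x y z : g, φ ⁅x, y⁆ z = 0 := by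
    intro x y z
    have key : φ ⁅x, y⁆ z = - φ ⁅x, y⁆ z :=
      calc φ ⁅x, y⁆ z = φ ⁅J x, J y⁆ z := (h12 x y z).symm
        _ = φ ⁅J (J x), J y⁆ (J z) := (h13 (J x) (J y) z).symm
        _ = φ ⁅-x, J y⁆ (J z) := by rw [hJ2]
        _ = - φ ⁅x, J y⁆ (J z) := by rw [neg_lie, hneg]
        _ = - φ ⁅x, y⁆ z := by rw [h23]
    linarith
  exact hxy (hnondeg _ (fun z => hzero x₀ y₀ z))
end

section
/- Let (g, J, φ) be a pseudo-Hermitian quadratic Lie algebra. Then J is bi-invariant (i.e. [Jx, y] = J[x, y] for all x, y ∈ g) if and only if g is an abelian Lie algebra. -/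
open TensorProduct

/-- In a pseudo-Hermitian quadratic Lie algebra, the complex structure
is bi-invariant iff the algebra is abelian. -/
theorem stmt_1 {g : Type*} [LieRing g] [LieAlgebra ℝ g]
    (J : g → g) (φ : g → g → ℝ)
    (h : IsPHQ g (fun x y => ⁅x, y⁆) J φ) :
    (∀ x y : g, ⁅J x, y⁆ = J ⁅x, y⁆) ↔ ∀ x y : g, ⁅x, y⁆ = 0 := by
  have Jneg : ∀ a : g, J (-a) = - J a := by
    intro a
    have := h.J_smul (-1) a
    simpa using this
  have J0 : J (0 : g) = 0 := by
    have := h.J_smul 0 (0 : g)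
    simpa using this
  have negl : ∀ a b : g, φ (-a) b = - φ a b := by
    intro a b
    have := h.phi_smul_left (-1) a b
    simpa using this
  have negr : ∀ a b : g, φ a (-b) = - φ a b := by
    intro a b
    rw [h.phi_symm, negl, h.phi_symm]
  have hermJ : ∀ a b : g, φ (J a) b = - φ a (J b) := by
    intro a b
    have hb : b = -(J (J b)) := by rw [h.J_sq]; simp
    calc φ (J a) b = φ (J a) (-(J (J b))) := by rw [← hb]
      _ = - φ (J a) (J (J b)) := negr _ _
      _ = - φ a (J b) := by rw [h.phi_hermitian]
  have inv : ∀ a b c : g, φ ⁅a, b⁆ c = - φ b ⁅a, c⁆ := by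
    intro a b c
    have := h.phi_invariant a b c
    linarith
  constructor
  · intro hbi x y
    have binv2 : ∀ a b : g, ⁅a, J b⁆ = J ⁅a, b⁆ := by
      intro a b
      calc ⁅a, J b⁆ = -⁅J b, a⁆ := (lie_skew _ _).symm
        _ = - J ⁅b, a⁆ := by rw [hbi b a]
        _ = J ⁅a, b⁆ := by rw [← lie_skew b a, Jneg, neg_neg]
    have key : ∀ z : g, φ (J ⁅x, y⁆) z = 0 := by
      intro z
      have e1 : φ (J ⁅x, y⁆) z = - φ y (J ⁅x, z⁆) := by
        rw [← hbi, inv, hbi]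
      have e2 : φ (J ⁅x, y⁆) z = φ y (J ⁅x, z⁆) := by
        rw [hermJ, inv, binv2]; ring
      linarith
    have hJ0 : J ⁅x, y⁆ = 0 := h.phi_nondeg _ key
    have := congrArg J hJ0
    rw [h.J_sq, J0] at this
    exact neg_eq_zero.mp this
  · intro hab x y
    rw [hab, hab, J0]
end

section
/- Let (g, J) be a real Lie algebra with a complex structure and let θ : g × g → g* be a skewsymmetric bilinear map which is a 2-cocycle for the Chevalley–Eilenberg complex with coefficients in the coadjoint representation (where x acts on f ∈ g* by x·f = −f∘ad(x)), and suppose θ(x,y)z = θ(Jx,Jy)z + θ(Jy,Jz)x + θ(Jz,Jx)y for all x,y,z ∈ g. On T*_θ g = g ⊕ g*, define φ(x+f, y+g') = f(y) + g'(x), the bracket [x+f, y+g']_T = [x,y] + θ(x,y) + f∘ad(y) − g'∘ad(x), and J_T(x+f) = Jx − f∘J. Then [·,·]_T is a Lie bracket on T*_θ g, J_T is a complex structure on T*_θ g, and (T*_θ g, J_T, φ) is a pseudo-Hermitian quadratic Lie algebra. -/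
open TensorProduct

/-- The `T*`-extension `T*_θ g = g ⊕ g*` of a Lie algebra with complex
structure by a compatible cyclic-type 2-cocycle is a pseudo-Hermitian quadratic
Lie algebra. -/
theorem stmt_2 {g : Type*} [LieRing g] [LieAlgebra ℝ g]
    (J : g →ₗ[ℝ] g) (hJ2 : ∀ x : g, J (J x) = -x)
    (hNij : ∀ x y : g, ⁅x, y⁆ + J ⁅J x, y⁆ + J ⁅x, J y⁆ - ⁅J x, J y⁆ = 0)
    (θ : g → g → Module.Dual ℝ g)
    (haddl : ∀ x y z : g, θ (x + y) z = θ x z + θ y z)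
    (hsmull : ∀ (c : ℝ) (x z : g), θ (c • x) z = c • θ x z)
    (hskew : ∀ x y : g, θ x y = - θ y x)
    (hcocycle : ∀ x y z w : g,
      -(θ y z ⁅x, w⁆) + θ x z ⁅y, w⁆ - θ x y ⁅z, w⁆
        - θ ⁅x, y⁆ z w + θ ⁅x, z⁆ y w - θ ⁅y, z⁆ x w = 0)
    (hcompat : ∀ x y z : g,
      θ x y z = θ (J x) (J y) z + θ (J y) (J z) x + θ (J z) (J x) y) :
    IsPHQ (g × Module.Dual ℝ g)
      (fun p q => (⁅p.1, q.1⁆,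
        θ p.1 q.1 + p.2 ∘ₗ (LieAlgebra.ad ℝ g q.1) - q.2 ∘ₗ (LieAlgebra.ad ℝ g p.1)))
      (fun p => (J p.1, - (p.2 ∘ₗ J)))
      (fun p q => p.2 q.1 + q.2 p.1) := by
  
  have hsk : ∀ a b c : g, θ a b c = -(θ b a c) := fun a b c => by rw [hskew]; simp
  have hcyc : ∀ a b c : g, θ a b c = θ b c a := fun a b c => by
    linarith [hcompat a b c, hcompat b c a]
  have hnegl : ∀ a b c : g, θ (-a) b c = -(θ a b c) := fun a b c => by
    rw [← neg_one_smul ℝ a, hsmull]; simp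
  constructor
  · -- br_add_left
    intro x y z
    refine Prod.ext (by simp [add_lie]) (LinearMap.ext fun w => ?_)
    simp only [Prod.fst_add, Prod.snd_add, LinearMap.add_apply, LinearMap.sub_apply,
      LinearMap.coe_comp, Function.comp_apply, LieAlgebra.ad_apply, haddl, add_lie, map_add]
    ring
  · -- br_smul_left
    intro c x z
    refine Prod.ext (by simp [smul_lie]) (LinearMap.ext fun w => ?_)
    simp only [Prod.smul_fst, Prod.smul_snd, LinearMap.add_apply, LinearMap.sub_apply,
      LinearMap.smul_apply, LinearMap.coe_comp, Function.comp_apply, LieAlgebra.ad_apply,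
      hsmull, smul_lie, map_smul, smul_eq_mul]
    ring
  · -- br_skew
    intro x y
    refine Prod.ext (by rw [Prod.fst_neg]; exact (lie_skew _ _).symm) (LinearMap.ext fun w => ?_)
    simp only [Prod.fst_neg, Prod.snd_neg, LinearMap.add_apply, LinearMap.sub_apply,
      LinearMap.neg_apply, LinearMap.coe_comp, Function.comp_apply, LieAlgebra.ad_apply]
    linarith [hsk x.1 y.1 w]
  · -- jacobi
    intro x y z
    refine Prod.ext (by simpa using lie_jacobi x.1 y.1 z.1) (LinearMap.ext fun w => ?_)
    simp only [Prod.fst_add, Prod.snd_add, Prod.fst_zero, Prod.snd_zero,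
      LinearMap.add_apply, LinearMap.sub_apply, LinearMap.coe_comp, Function.comp_apply,
      LieAlgebra.ad_apply, LinearMap.zero_apply]
    have hf : x.2 ⁅⁅y.1, z.1⁆, w⁆ = x.2 ⁅y.1, ⁅z.1, w⁆⁆ - x.2 ⁅z.1, ⁅y.1, w⁆⁆ := by
      rw [lie_lie, map_sub]
    have hg : y.2 ⁅⁅z.1, x.1⁆, w⁆ = y.2 ⁅z.1, ⁅x.1, w⁆⁆ - y.2 ⁅x.1, ⁅z.1, w⁆⁆ := by
      rw [lie_lie, map_sub]
    have hh : z.2 ⁅⁅x.1, y.1⁆, w⁆ = z.2 ⁅x.1, ⁅y.1, w⁆⁆ - z.2 ⁅y.1, ⁅x.1, w⁆⁆ := by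
      rw [lie_lie, map_sub]
    have e1 : θ x.1 ⁅y.1, z.1⁆ w = -(θ ⁅y.1, z.1⁆ x.1 w) := hsk _ _ _
    have e2 : θ y.1 ⁅z.1, x.1⁆ w = -(θ ⁅z.1, x.1⁆ y.1 w) := hsk _ _ _
    have e3 : θ z.1 ⁅x.1, y.1⁆ w = -(θ ⁅x.1, y.1⁆ z.1 w) := hsk _ _ _
    have e4 : θ ⁅z.1, x.1⁆ y.1 w = -(θ ⁅x.1, z.1⁆ y.1 w) := by
      rw [← lie_skew x.1 z.1, hnegl, neg_neg]
    have e5 : θ z.1 x.1 ⁅y.1, w⁆ = -(θ x.1 z.1 ⁅y.1, w⁆) := hsk _ _ _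
    linarith [hcocycle x.1 y.1 z.1 w]
  · -- J_add
    intro x y
    refine Prod.ext (by simp) (LinearMap.ext fun w => by simp; ring)
  · -- J_smul
    intro c x
    refine Prod.ext (by simp) (LinearMap.ext fun w => by simp)
  · -- J_sq
    intro x
    refine Prod.ext (by simp [hJ2]) (LinearMap.ext fun w => ?_)
    simp [hJ2 w]
  · -- integrable
    intro x y
    refine Prod.ext (by simpa using hNij x.1 y.1) (LinearMap.ext fun w => ?_)
    simp only [Prod.fst_add, Prod.snd_add, Prod.fst_sub, Prod.snd_sub, Prod.fst_zero,
      Prod.snd_zero, LinearMap.add_apply, LinearMap.sub_apply, LinearMap.neg_apply,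
      LinearMap.coe_comp, Function.comp_apply, LieAlgebra.ad_apply, LinearMap.zero_apply]
    have hf : x.2 ⁅y.1, w⁆ + x.2 (J ⁅J y.1, w⁆) + x.2 (J ⁅y.1, J w⁆) - x.2 ⁅J y.1, J w⁆ = 0 := by
      rw [← map_add, ← map_add, ← map_sub]
      rw [hNij y.1 w]; exact map_zero _
    have hg : y.2 ⁅x.1, w⁆ + y.2 (J ⁅J x.1, w⁆) + y.2 (J ⁅x.1, J w⁆) - y.2 ⁅J x.1, J w⁆ = 0 := by
      rw [← map_add, ← map_add, ← map_sub]
      rw [hNij x.1 w]; exact map_zero _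
    have e1 : θ (J x.1) y.1 (J w) = θ (J w) (J x.1) y.1 := by rw [hcyc (J w) (J x.1) y.1]
    have e2 : θ x.1 (J y.1) (J w) = θ (J y.1) (J w) x.1 := hcyc _ _ _
    linarith [hcompat x.1 y.1 w]
  · -- phi_add_left
    intro x y z; simp; ring
  · -- phi_smul_left
    intro c x y; simp; ring
  · -- phi_symm
    intro x y; ring
  · -- phi_nondeg
    intro p hp
    have hf : p.2 = 0 := LinearMap.ext fun y => by simpa using hp (y, 0)
    have hx : p.1 = 0 := by
      rw [← Module.forall_dual_apply_eq_zero_iff ℝ p.1]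
      intro f; simpa [hf] using hp (0, f)
    exact Prod.ext hx hf
  · -- phi_invariant
    intro x y z
    simp only [LinearMap.add_apply, LinearMap.sub_apply, LinearMap.coe_comp,
      Function.comp_apply, LieAlgebra.ad_apply]
    have ha : x.2 ⁅z.1, y.1⁆ = -(x.2 ⁅y.1, z.1⁆) := by rw [← lie_skew, map_neg]
    linarith [hcyc x.1 z.1 y.1, hsk z.1 y.1 x.1, hcyc x.1 y.1 z.1]
  · -- phi_hermitian
    intro x y
    simp only [LinearMap.neg_apply, LinearMap.coe_comp, Function.comp_apply]
    rw [hJ2 y.1, hJ2 x.1, map_neg, map_neg]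
    ring
end

section
/- Let (k, J) be the Kodaira–Thurston algebra with its abelian complex structure. Then: (a) every skewsymmetric bilinear map θ : k × k → k* that is cyclic (θ(x,y)z = θ(y,z)x for all x,y,z) and a 2-cocycle for the coadjoint representation is a real linear combination of the four cyclic cocycles θ₁, θ₂, θ₃, θ₄ given (up to skewsymmetry) by θ₁(x₁,x₂)=x₃*, θ₁(x₁,x₃)=−x₂*, θ₁(x₂,x₃)=x₁*; θ₂(x₁,x₂)=x₄*, θ₂(x₁,x₄)=−x₂*, θ₂(x₂,x₄)=x₁*; θ₃(x₁,x₃)=x₄*, θ₃(x₁,x₄)=−x₃*, θ₃(x₃,x₄)=x₁*; θ₄(x₂,x₃)=x₄*, θ₄(x₂,x₄)=−x₃*, θ₄(x₃,x₄)=x₂* (all other values on basis pairs zero); and (b) every such θ satisfies the compatibility condition θ(x,y)z = θ(Jx,Jy)z + θ(Jy,Jz)x + θ(Jz,Jx)y for all x,y,z ∈ k. -/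
open TensorProduct

/-- every cyclic 2-cocycle `θ : k × k → k*` of the Kodaira–Thurston
algebra is a linear combination of `θ₁, θ₂, θ₃, θ₄`, and every such `θ` satisfies
the compatibility condition with the abelian complex structure `J`. -/
theorem stmt_3 (θ : (Fin 4 → ℝ) → (Fin 4 → ℝ) → Module.Dual ℝ (Fin 4 → ℝ))
    (haddl : ∀ x y z, θ (x + y) z = θ x z + θ y z)
    (hsmull : ∀ (c : ℝ) (x z : Fin 4 → ℝ), θ (c • x) z = c • θ x z)
    (hskew : ∀ x y, θ x y = - θ y x)
    (hcyc : ∀ x y z : Fin 4 → ℝ, θ x y z = θ y z x)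
    (hcocycle : ∀ x y z w : Fin 4 → ℝ,
      -(θ y z (brK x w)) + θ x z (brK y w) - θ x y (brK z w)
        - θ (brK x y) z w + θ (brK x z) y w - θ (brK y z) x w = 0) :
    (∃ a₁ a₂ a₃ a₄ : ℝ, ∀ x y : Fin 4 → ℝ,
      θ x y = a₁ • th1 x y + a₂ • th2 x y + a₃ • th3 x y + a₄ • th4 x y) ∧
    (∀ x y z : Fin 4 → ℝ,
      θ x y z = θ (jK x) (jK y) z + θ (jK y) (jK z) x + θ (jK z) (jK x) y) := by
  
  have hA : ∀ a b y z : Fin 4 → ℝ, θ (a + b) y z = θ a y z + θ b y z := by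
    intro a b y z; rw [haddl]; rfl
  have hS : ∀ (c : ℝ) (a y z : Fin 4 → ℝ), θ (c • a) y z = c * θ a y z := by
    intro c a y z; rw [hsmull]; rfl
  have hsk : ∀ x y z : Fin 4 → ℝ, θ x y z = -θ y x z := by
    intro x y z; rw [hskew]; rfl
  have hA2 : ∀ x a b z : Fin 4 → ℝ, θ x (a + b) z = θ x a z + θ x b z := by
    intro x a b z
    have h1 := hsk x (a + b) z; have h2 := hA a b x z
    have h3 := hsk a x z; have h4 := hsk b x z; linarith
  have hS2 : ∀ (x : Fin 4 → ℝ) (c : ℝ) (a z : Fin 4 → ℝ), θ x (c • a) z = c * θ x a z := by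
    intro x c a z
    rw [hsk x (c • a) z, hS, hsk a x z]; ring
  have hA3 : ∀ x y a b : Fin 4 → ℝ, θ x y (a + b) = θ x y a + θ x y b := by
    intro x y a b; exact map_add (θ x y) a b
  have hS3 : ∀ (x y : Fin 4 → ℝ) (c : ℝ) (a : Fin 4 → ℝ), θ x y (c • a) = c * θ x y a := by
    intro x y c a; rw [map_smul]; rfl
  have h0a : ∀ x z : Fin 4 → ℝ, θ x x z = 0 := by
    intro x z; have := hsk x x z; linarith
  have h0b : ∀ x y : Fin 4 → ℝ, θ x y y = 0 := by
    intro x y; rw [hcyc]; exact h0a y x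
  have h0c : ∀ x y : Fin 4 → ℝ, θ x y x = 0 := by
    intro x y; rw [hcyc]; exact h0b y x
  have hv120 : θ ![(0:ℝ),1,0,0] ![(0:ℝ),0,1,0] ![(1:ℝ),0,0,0] = (θ ![(1:ℝ),0,0,0] ![(0:ℝ),1,0,0] ![(0:ℝ),0,1,0]) := by rw [hcyc, hcyc]
  have hv201 : θ ![(0:ℝ),0,1,0] ![(1:ℝ),0,0,0] ![(0:ℝ),1,0,0] = (θ ![(1:ℝ),0,0,0] ![(0:ℝ),1,0,0] ![(0:ℝ),0,1,0]) := by rw [hcyc]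
  have hv102 : θ ![(0:ℝ),1,0,0] ![(1:ℝ),0,0,0] ![(0:ℝ),0,1,0] = -(θ ![(1:ℝ),0,0,0] ![(0:ℝ),1,0,0] ![(0:ℝ),0,1,0]) := by rw [hsk]
  have hv021 : θ ![(1:ℝ),0,0,0] ![(0:ℝ),0,1,0] ![(0:ℝ),1,0,0] = -(θ ![(1:ℝ),0,0,0] ![(0:ℝ),1,0,0] ![(0:ℝ),0,1,0]) := by rw [hcyc, hsk, hcyc, hcyc]
  have hv210 : θ ![(0:ℝ),0,1,0] ![(0:ℝ),1,0,0] ![(1:ℝ),0,0,0] = -(θ ![(1:ℝ),0,0,0] ![(0:ℝ),1,0,0] ![(0:ℝ),0,1,0]) := by rw [hsk, hcyc, hcyc]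
  have hv130 : θ ![(0:ℝ),1,0,0] ![(0:ℝ),0,0,1] ![(1:ℝ),0,0,0] = (θ ![(1:ℝ),0,0,0] ![(0:ℝ),1,0,0] ![(0:ℝ),0,0,1]) := by rw [hcyc, hcyc]
  have hv301 : θ ![(0:ℝ),0,0,1] ![(1:ℝ),0,0,0] ![(0:ℝ),1,0,0] = (θ ![(1:ℝ),0,0,0] ![(0:ℝ),1,0,0] ![(0:ℝ),0,0,1]) := by rw [hcyc]
  have hv103 : θ ![(0:ℝ),1,0,0] ![(1:ℝ),0,0,0] ![(0:ℝ),0,0,1] = -(θ ![(1:ℝ),0,0,0] ![(0:ℝ),1,0,0] ![(0:ℝ),0,0,1]) := by rw [hsk]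
  have hv031 : θ ![(1:ℝ),0,0,0] ![(0:ℝ),0,0,1] ![(0:ℝ),1,0,0] = -(θ ![(1:ℝ),0,0,0] ![(0:ℝ),1,0,0] ![(0:ℝ),0,0,1]) := by rw [hcyc, hsk, hcyc, hcyc]
  have hv310 : θ ![(0:ℝ),0,0,1] ![(0:ℝ),1,0,0] ![(1:ℝ),0,0,0] = -(θ ![(1:ℝ),0,0,0] ![(0:ℝ),1,0,0] ![(0:ℝ),0,0,1]) := by rw [hsk, hcyc, hcyc]
  have hv230 : θ ![(0:ℝ),0,1,0] ![(0:ℝ),0,0,1] ![(1:ℝ),0,0,0] = (θ ![(1:ℝ),0,0,0] ![(0:ℝ),0,1,0] ![(0:ℝ),0,0,1]) := by rw [hcyc, hcyc]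
  have hv302 : θ ![(0:ℝ),0,0,1] ![(1:ℝ),0,0,0] ![(0:ℝ),0,1,0] = (θ ![(1:ℝ),0,0,0] ![(0:ℝ),0,1,0] ![(0:ℝ),0,0,1]) := by rw [hcyc]
  have hv203 : θ ![(0:ℝ),0,1,0] ![(1:ℝ),0,0,0] ![(0:ℝ),0,0,1] = -(θ ![(1:ℝ),0,0,0] ![(0:ℝ),0,1,0] ![(0:ℝ),0,0,1]) := by rw [hsk]
  have hv032 : θ ![(1:ℝ),0,0,0] ![(0:ℝ),0,0,1] ![(0:ℝ),0,1,0] = -(θ ![(1:ℝ),0,0,0] ![(0:ℝ),0,1,0] ![(0:ℝ),0,0,1]) := by rw [hcyc, hsk, hcyc, hcyc]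
  have hv320 : θ ![(0:ℝ),0,0,1] ![(0:ℝ),0,1,0] ![(1:ℝ),0,0,0] = -(θ ![(1:ℝ),0,0,0] ![(0:ℝ),0,1,0] ![(0:ℝ),0,0,1]) := by rw [hsk, hcyc, hcyc]
  have hv231 : θ ![(0:ℝ),0,1,0] ![(0:ℝ),0,0,1] ![(0:ℝ),1,0,0] = (θ ![(0:ℝ),1,0,0] ![(0:ℝ),0,1,0] ![(0:ℝ),0,0,1]) := by rw [hcyc, hcyc]
  have hv312 : θ ![(0:ℝ),0,0,1] ![(0:ℝ),1,0,0] ![(0:ℝ),0,1,0] = (θ ![(0:ℝ),1,0,0] ![(0:ℝ),0,1,0] ![(0:ℝ),0,0,1]) := by rw [hcyc]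
  have hv213 : θ ![(0:ℝ),0,1,0] ![(0:ℝ),1,0,0] ![(0:ℝ),0,0,1] = -(θ ![(0:ℝ),1,0,0] ![(0:ℝ),0,1,0] ![(0:ℝ),0,0,1]) := by rw [hsk]
  have hv132 : θ ![(0:ℝ),1,0,0] ![(0:ℝ),0,0,1] ![(0:ℝ),0,1,0] = -(θ ![(0:ℝ),1,0,0] ![(0:ℝ),0,1,0] ![(0:ℝ),0,0,1]) := by rw [hcyc, hsk, hcyc, hcyc]
  have hv321 : θ ![(0:ℝ),0,0,1] ![(0:ℝ),0,1,0] ![(0:ℝ),1,0,0] = -(θ ![(0:ℝ),1,0,0] ![(0:ℝ),0,1,0] ![(0:ℝ),0,0,1]) := by rw [hsk, hcyc, hcyc]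
  have hxd : ∀ x : Fin 4 → ℝ, x = x 0 • ![(1:ℝ),0,0,0] + x 1 • ![(0:ℝ),1,0,0] + x 2 • ![(0:ℝ),0,1,0] + x 3 • ![(0:ℝ),0,0,1] := by
    intro x; funext i; fin_cases i <;> simp
  have key : ∀ x y z : Fin 4 → ℝ, θ x y z = θ ![(1:ℝ),0,0,0] ![(0:ℝ),1,0,0] ![(0:ℝ),0,1,0] * (x 0 * (y 1 * z 2 - y 2 * z 1) - x 1 * (y 0 * z 2 - y 2 * z 0) + x 2 * (y 0 * z 1 - y 1 * z 0)) + θ ![(1:ℝ),0,0,0] ![(0:ℝ),1,0,0] ![(0:ℝ),0,0,1] * (x 0 * (y 1 * z 3 - y 3 * z 1) - x 1 * (y 0 * z 3 - y 3 * z 0) + x 3 * (y 0 * z 1 - y 1 * z 0)) + θ ![(1:ℝ),0,0,0] ![(0:ℝ),0,1,0] ![(0:ℝ),0,0,1] * (x 0 * (y 2 * z 3 - y 3 * z 2) - x 2 * (y 0 * z 3 - y 3 * z 0) + x 3 * (y 0 * z 2 - y 2 * z 0)) + θ ![(0:ℝ),1,0,0] ![(0:ℝ),0,1,0] ![(0:ℝ),0,0,1]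 * (x 1 * (y 2 * z 3 - y 3 * z 2) - x 2 * (y 1 * z 3 - y 3 * z 1) + x 3 * (y 1 * z 2 - y 2 * z 1)) := by
    intro x y z
    conv_lhs => rw [hxd x, hxd y, hxd z]
    simp only [hA, hS, hA2, hS2, hA3, hS3]
    simp only [h0a, h0b, h0c, hv120, hv201, hv102, hv021, hv210, hv130, hv301, hv103, hv031, hv310, hv230, hv302, hv203, hv032, hv320, hv231, hv312, hv213, hv132, hv321]
    ring
  constructor
  · refine ⟨θ ![(1:ℝ),0,0,0] ![(0:ℝ),1,0,0] ![(0:ℝ),0,1,0], θ ![(1:ℝ),0,0,0] ![(0:ℝ),1,0,0] ![(0:ℝ),0,0,1], θ ![(1:ℝ),0,0,0] ![(0:ℝ),0,1,0] ![(0:ℝ),0,0,1], θ ![(0:ℝ),1,0,0] ![(0:ℝ),0,1,0] ![(0:ℝ),0,0,1], fun x y => ?_⟩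
    refine LinearMap.ext fun z => ?_
    rw [key x y z]
    simp only [th1, th2, th3, th4, p4, LinearMap.add_apply, LinearMap.sub_apply,
      LinearMap.smul_apply, LinearMap.proj_apply, smul_eq_mul]
    ring
  · intro x y z
    rw [key x y z, key (jK x) (jK y) z, key (jK y) (jK z) x, key (jK z) (jK x) y]
    simp only [jK, Matrix.cons_val_zero, Matrix.cons_val_one, Matrix.head_cons,
      Matrix.cons_val_two, Matrix.tail_cons, Matrix.cons_val_three]
    ring
end

section
/- Let A be a real associative commutative (not necessarily unital) algebra admitting a nondegenerate symmetric bilinear form B : A × A → ℝ with B(ab, c) = B(b, ac) for all a,b,c ∈ A, and let (g, J, φ) be a pseudo-Hermitian quadratic Lie algebra. Then on the tensor product G = g ⊗_ℝ A the bracket determined by [x⊗a, y⊗b] = [x,y]⊗(ab) is a Lie bracket, the map J' determined by J'(x⊗a) = Jx⊗a is a complex structure, and the bilinear form ϕ determined by ϕ(x⊗a, y⊗b) = φ(x,y)·B(a,b) is nondegenerate, symmetric and invariant, so that (G, J', ϕ) is a pseudo-Hermitian quadratic Lie algebra. -/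
open TensorProduct

/-! Every axiom except nondegeneracy is multilinear, so it suffices to check it on pure tensors,
where it reduces to the corresponding axiom of `g` combined with an identity in `A`: commutativity
for skew-symmetry, commutativity and associativity for the Jacobi identity, `B(ab, c) = B(b, ac)`
for invariance. For nondegeneracy write `t = ∑ eᵢ ⊗ aᵢ` in a basis `(eᵢ)` of `g`; pairing `t`
with `y ⊗ c` gives `φ(∑ B(aᵢ, c) eᵢ, y)`, so nondegeneracy of `φ` and then of `B` forces every
`aᵢ = 0`. -/

section CurrentAlgebra

variable {R M A : Type*} [CommRing R] [AddCommGroup M] [Module R M]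
  [NonUnitalCommRing A] [Module R A] [SMulCommClass R A A] [IsScalarTower R A A]

noncomputable def currentBracket (β : M →ₗ[R] M →ₗ[R] M) :
    M ⊗[R] A →ₗ[R] M ⊗[R] A →ₗ[R] M ⊗[R] A :=
  map₂ β (LinearMap.mul R A)

@[simp]
theorem currentBracket_tmul (β : M →ₗ[R] M →ₗ[R] M) (x y : M) (a b : A) :
    currentBracket β (x ⊗ₜ a) (y ⊗ₜ b) = β x y ⊗ₜ (a * b) :=
  rfl

variable {β : M →ₗ[R] M →ₗ[R] M}

theorem currentBracket_skew (hβ : ∀ x y, β x y = -β y x) (u v : M ⊗[R] A) :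
    currentBracket β u v = -currentBracket β v u := by
  induction u using TensorProduct.induction_on with
  | zero => simp
  | add u₁ u₂ h₁ h₂ => simp only [map_add, LinearMap.add_apply, h₁, h₂, neg_add]
  | tmul x a =>
    induction v using TensorProduct.induction_on with
    | zero => simp
    | add v₁ v₂ h₁ h₂ => simp only [map_add, LinearMap.add_apply, h₁, h₂, neg_add]
    | tmul y b => rw [currentBracket_tmul, currentBracket_tmul, hβ, neg_tmul, mul_comm]

theorem currentBracket_jacobi
    (hβ : ∀ x y z, β x (β y z) + β y (β z x) + β z (β x y) = 0) (u v w : M ⊗[R] A) :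
    currentBracket β u (currentBracket β v w) + currentBracket β v (currentBracket β w u)
      + currentBracket β w (currentBracket β u v) = 0 := by
  induction u using TensorProduct.induction_on with
  | zero => simp
  | add u₁ u₂ h₁ h₂ =>
    simp only [map_add, LinearMap.add_apply]
    linear_combination (norm := abel) h₁ + h₂
  | tmul x a =>
    induction v using TensorProduct.induction_on with
    | zero => simp
    | add v₁ v₂ h₁ h₂ =>
      simp only [map_add, LinearMap.add_apply]
      linear_combination (norm := abel) h₁ + h₂
    | tmul y b =>
      induction w using TensorProduct.induction_on with
      | zero => simp
      | add w₁ w₂ h₁ h₂ =>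
        simp only [map_add, LinearMap.add_apply]
        linear_combination (norm := abel) h₁ + h₂
      | tmul z c =>
        have hb : b * (c * a) = a * (b * c) := by ac_rfl
        have hc : c * (a * b) = a * (b * c) := by ac_rfl
        simp only [currentBracket_tmul]
        rw [hb, hc, ← add_tmul, ← add_tmul, hβ, zero_tmul]

theorem currentBracket_integrable {J : M →ₗ[R] M}
    (hJ : ∀ x y, β x y + J (β (J x) y) + J (β x (J y)) - β (J x) (J y) = 0)
    (u v : M ⊗[R] A) :
    currentBracket β u v + J.rTensor A (currentBracket β (J.rTensor A u) v)
      + J.rTensor A (currentBracket β u (J.rTensor A v))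
      - currentBracket β (J.rTensor A u) (J.rTensor A v) = 0 := by
  induction u using TensorProduct.induction_on with
  | zero => simp
  | add u₁ u₂ h₁ h₂ =>
    simp only [map_add, LinearMap.add_apply]
    linear_combination (norm := abel) h₁ + h₂
  | tmul x a =>
    induction v using TensorProduct.induction_on with
    | zero => simp
    | add v₁ v₂ h₁ h₂ =>
      simp only [map_add]
      linear_combination (norm := abel) h₁ + h₂
    | tmul y b =>
      simp only [LinearMap.rTensor_tmul, currentBracket_tmul]
      rw [← add_tmul, ← add_tmul, ← sub_tmul, hJ, zero_tmul]

theorem LinearMap.BilinForm.tmul_currentBracket_invariant {φ : LinearMap.BilinForm R M}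
    {B : LinearMap.BilinForm R A} (hφ : ∀ x y z, φ (β x y) z + φ y (β x z) = 0)
    (hB : ∀ a b c, B (a * b) c = B b (a * c)) (u v w : M ⊗[R] A) :
    φ.tmul B (currentBracket β u v) w + φ.tmul B v (currentBracket β u w) = 0 := by
  induction u using TensorProduct.induction_on with
  | zero => simp
  | add u₁ u₂ h₁ h₂ =>
    simp only [map_add, LinearMap.add_apply]
    linear_combination h₁ + h₂
  | tmul x a =>
    induction v using TensorProduct.induction_on with
    | zero => simp
    | add v₁ v₂ h₁ h₂ =>
      simp only [map_add, LinearMap.add_apply]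
      linear_combination h₁ + h₂
    | tmul y b =>
      induction w using TensorProduct.induction_on with
      | zero => simp
      | add w₁ w₂ h₁ h₂ =>
        simp only [map_add]
        linear_combination h₁ + h₂
      | tmul z c =>
        simp only [currentBracket_tmul, LinearMap.BilinForm.tensorDistrib_tmul, smul_eq_mul]
        rw [hB, ← mul_add, hφ, mul_zero]

end CurrentAlgebra

section BilinFormTmul

variable {R M₁ M₂ : Type*} [CommRing R] [AddCommGroup M₁] [Module R M₁]
  [AddCommGroup M₂] [Module R M₂]

theorem LinearMap.rTensor_rTensor_of_sq_eq_neg {J : M₁ →ₗ[R] M₁} (hJ : ∀ x, J (J x) = -x)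
    (u : M₁ ⊗[R] M₂) : J.rTensor M₂ (J.rTensor M₂ u) = -u := by
  have hJ' : J ∘ₗ J = -LinearMap.id := LinearMap.ext hJ
  rw [← LinearMap.comp_apply, ← LinearMap.rTensor_comp, hJ', LinearMap.rTensor_neg,
    LinearMap.rTensor_id, LinearMap.neg_apply, LinearMap.id_apply]

theorem LinearMap.BilinForm.tmul_rTensor_rTensor {B₁ : LinearMap.BilinForm R M₁}
    {B₂ : LinearMap.BilinForm R M₂} {J : M₁ →ₗ[R] M₁} (hJ : ∀ x y, B₁ (J x) (J y) = B₁ x y)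
    (u v : M₁ ⊗[R] M₂) : B₁.tmul B₂ (J.rTensor M₂ u) (J.rTensor M₂ v) = B₁.tmul B₂ u v := by
  have h : (B₁.tmul B₂).compl₁₂ (J.rTensor M₂) (J.rTensor M₂) = B₁.tmul B₂ := by
    ext x a y b
    simp [hJ]
  exact LinearMap.congr_fun₂ h u v

theorem LinearMap.SeparatingLeft.tmul [Module.Free R M₁] {B₁ : LinearMap.BilinForm R M₁}
    {B₂ : LinearMap.BilinForm R M₂} (h₁ : B₁.SeparatingLeft) (h₂ : B₂.SeparatingLeft) :
    (B₁.tmul B₂).SeparatingLeft := by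
  intro t ht
  let ℬ := Module.Free.chooseBasis R M₁
  suffices hcoeff : ∀ i c, B₂ (equivFinsuppOfBasisLeft ℬ t i) c = 0 by
    have : equivFinsuppOfBasisLeft ℬ t = 0 := Finsupp.ext fun i => h₂ _ (hcoeff i)
    simpa using this
  intro i c
  let κ : M₁ ⊗[R] M₂ →ₗ[R] M₁ := (TensorProduct.rid R M₁).toLinearMap ∘ₗ (B₂.flip c).lTensor M₁
  have hκ : ∀ s y, B₁.tmul B₂ s (y ⊗ₜ c) = B₁ (κ s) y := by
    intro s y
    induction s using TensorProduct.induction_on with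
    | zero => simp
    | add s₁ s₂ h₁ h₂ => simp only [map_add, LinearMap.add_apply, h₁, h₂]
    | tmul x a => simp [κ, mul_comm]
  have hrepr : ∀ s, ℬ.repr (κ s) i = B₂ (equivFinsuppOfBasisLeft ℬ s i) c := by
    intro s
    induction s using TensorProduct.induction_on with
    | zero => simp
    | add s₁ s₂ h₁ h₂ => simp only [map_add, Finsupp.add_apply, LinearMap.add_apply, h₁, h₂]
    | tmul x a => simp [κ, mul_comm]
  rw [← hrepr, h₁ (κ t) fun y => (hκ t y).symm.trans (ht _), map_zero, Finsupp.zero_apply]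

end BilinFormTmul

def LinearMap.BilinForm.mkOfSymm {R M : Type*} [CommRing R] [AddCommGroup M] [Module R M]
    (f : M → M → R) (hadd : ∀ x y z, f (x + y) z = f x z + f y z)
    (hsmul : ∀ (c : R) x y, f (c • x) y = c * f x y) (hsymm : ∀ x y, f x y = f y x) :
    LinearMap.BilinForm R M :=
  LinearMap.mk₂ R f hadd hsmul
    (fun x y z => by rw [hsymm, hadd, hsymm y, hsymm z])
    (fun c x y => by rw [hsymm, hsmul, hsymm]; rfl)

namespace IsPHQ

variable {V : Type*} [AddCommGroup V] [Module ℝ V] {br : V → V → V} {J : V → V}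
  {φ : V → V → ℝ}

def bracket (h : IsPHQ V br J φ) : V →ₗ[ℝ] V →ₗ[ℝ] V :=
  LinearMap.mk₂ ℝ br h.br_add_left h.br_smul_left
    (fun x y z => by rw [h.br_skew, h.br_add_left, neg_add, ← h.br_skew, ← h.br_skew])
    (fun c x y => by rw [h.br_skew, h.br_smul_left, ← smul_neg, ← h.br_skew])

def complexStructure (h : IsPHQ V br J φ) : V →ₗ[ℝ] V where
  toFun := J
  map_add' := h.J_add
  map_smul' := h.J_smul

def form (h : IsPHQ V br J φ) : LinearMap.BilinForm ℝ V :=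
  .mkOfSymm φ h.phi_add_left h.phi_smul_left h.phi_symm

theorem tensor {A : Type*} [NonUnitalCommRing A] [Module ℝ A] [SMulCommClass ℝ A A]
    [IsScalarTower ℝ A A] (h : IsPHQ V br J φ) {B : LinearMap.BilinForm ℝ A}
    (hBsymm : ∀ a b, B a b = B b a) (hBsep : B.SeparatingLeft)
    (hBassoc : ∀ a b c, B (a * b) c = B b (a * c)) :
    IsPHQ (V ⊗[ℝ] A) (fun u v => currentBracket h.bracket u v)
      (fun u => h.complexStructure.rTensor A u) (fun u v => h.form.tmul B u v) where
  br_add_left _ _ _ := by simp only [map_add, LinearMap.add_apply]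
  br_smul_left _ _ _ := by simp only [map_smul, LinearMap.smul_apply]
  br_skew := currentBracket_skew h.br_skew
  jacobi := currentBracket_jacobi h.jacobi
  J_add := map_add _
  J_smul := map_smul _
  J_sq := LinearMap.rTensor_rTensor_of_sq_eq_neg h.J_sq
  integrable := currentBracket_integrable h.integrable
  phi_add_left _ _ _ := by simp only [map_add, LinearMap.add_apply]
  phi_smul_left _ _ _ := by simp only [map_smul, LinearMap.smul_apply, smul_eq_mul]
  phi_symm := (LinearMap.IsSymm.tmul (B₁ := h.form) ⟨h.phi_symm⟩ ⟨hBsymm⟩).eq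
  phi_nondeg := LinearMap.SeparatingLeft.tmul h.phi_nondeg hBsep
  phi_invariant := LinearMap.BilinForm.tmul_currentBracket_invariant h.phi_invariant hBassoc
  phi_hermitian := LinearMap.BilinForm.tmul_rTensor_rTensor h.phi_hermitian

end IsPHQ

/-- the tensor product of a pseudo-Hermitian quadratic Lie algebra with
a commutative associative algebra carrying a suitable invariant form is again a
pseudo-Hermitian quadratic Lie algebra. -/
theorem stmt_4 {g A : Type*} [AddCommGroup g] [Module ℝ g]
    [NonUnitalCommRing A] [Module ℝ A] [SMulCommClass ℝ A A] [IsScalarTower ℝ A A]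
    (B : A → A → ℝ)
    (hBadd : ∀ a b c : A, B (a + b) c = B a c + B b c)
    (hBsmul : ∀ (r : ℝ) (a b : A), B (r • a) b = r * B a b)
    (hBsymm : ∀ a b : A, B a b = B b a)
    (hBnondeg : ∀ a : A, (∀ b : A, B a b = 0) → a = 0)
    (hBassoc : ∀ a b c : A, B (a * b) c = B b (a * c))
    (br : g → g → g) (J : g → g) (φ : g → g → ℝ)
    (h : IsPHQ g br J φ) :
    ∃ (brG : g ⊗[ℝ] A → g ⊗[ℝ] A → g ⊗[ℝ] A)
      (J' : g ⊗[ℝ] A → g ⊗[ℝ] A) (ϕ : g ⊗[ℝ] A → g ⊗[ℝ] A → ℝ),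
      (∀ (x y : g) (a b : A), brG (x ⊗ₜ[ℝ] a) (y ⊗ₜ[ℝ] b) = br x y ⊗ₜ[ℝ] (a * b)) ∧
      (∀ (x : g) (a : A), J' (x ⊗ₜ[ℝ] a) = J x ⊗ₜ[ℝ] a) ∧
      (∀ (x y : g) (a b : A), ϕ (x ⊗ₜ[ℝ] a) (y ⊗ₜ[ℝ] b) = φ x y * B a b) ∧
      IsPHQ (g ⊗[ℝ] A) brG J' ϕ := by
  let Bₗ := LinearMap.BilinForm.mkOfSymm B hBadd hBsmul hBsymm
  refine ⟨fun u v => currentBracket h.bracket u v, fun u => h.complexStructure.rTensor A u,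
    fun u v => h.form.tmul Bₗ u v, fun _ _ _ _ => rfl, fun _ _ => rfl,
    fun x y a b => mul_comm (B a b) (φ x y), h.tensor hBsymm hBnondeg hBassoc⟩
end

section
/- Let (g₀, [·,·]₀, J₀, φ₀) be a pseudo-Hermitian quadratic Lie algebra, and let D, F be φ₀-skewsymmetric derivations of g₀ such that (F + J₀D)∘J₀ = J₀∘(F + J₀D) and F∘D − D∘F = ad_{g₀}(s₀) for some s₀ ∈ g₀. On the vector space g = ℝz ⊕ ℝz' ⊕ g₀ ⊕ ℝv' ⊕ ℝv, define the skewsymmetric product with nonzero values [v,v'] = s₀, [v,x] = Fx − φ₀(s₀,x)z', [v',x] = Dx + φ₀(s₀,x)z, [x,y] = [x,y]₀ + φ₀(Dx,y)z' + φ₀(Fx,y)z for x,y ∈ g₀; the symmetric bilinear form φ with nonzero pairings φ(z,v) = φ(z',v') = 1 and φ(x,y) = φ₀(x,y) for x,y ∈ g₀; and J ∈ gl(g) by Jz = z', Jz' = −z, Jv = v', Jv' = −v, Jx = J₀x for x ∈ g₀. Then [·,·] is a Lie bracket on g, (g, [·,·], φ) is a quadratic Lie algebra, J is a complex structure on g,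 and (g, J, φ) is a pseudo-Hermitian quadratic Lie algebra. -/
open TensorProduct

/-- the pHQ-double extension of a pseudo-Hermitian quadratic Lie
algebra by a plane, by means of skewsymmetric derivations `(D, F)` and `s₀`, is a
pseudo-Hermitian quadratic Lie algebra. -/
theorem stmt_6 {V : Type*} [AddCommGroup V] [Module ℝ V]
    (br₀ : V → V → V) (J₀ : V → V) (φ₀ : V → V → ℝ)
    (h₀ : IsPHQ V br₀ J₀ φ₀)
    (D F : V → V) (s₀ : V)
    (hdata : IsPHQDblExtData V br₀ J₀ φ₀ D F s₀) :
    IsPHQ (ℝ × ℝ × V × ℝ × ℝ) (extBr br₀ φ₀ D F s₀) (extJ J₀) (extPhi φ₀) := by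
  obtain ⟨hDa, hDs, hFa, hFs, hDsk, hFsk, hDd, hFd, hJc, hFD⟩ := hdata
  have hJa := h₀.J_add
  have hJs := h₀.J_smul
  -- zero lemmas
  have hD0 : D 0 = 0 := by simpa using hDs 0 0
  have hF0 : F 0 = 0 := by simpa using hFs 0 0
  have hJ0 : J₀ 0 = 0 := by simpa using hJs 0 0
  have hDneg : ∀ x, D (-x) = - D x := fun x => by
    have h := hDa x (-x); rw [add_neg_cancel, hD0] at h
    exact eq_neg_of_add_eq_zero_right h.symm
  have hFneg : ∀ x, F (-x) = - F x := fun x => by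
    have h := hFa x (-x); rw [add_neg_cancel, hF0] at h
    exact eq_neg_of_add_eq_zero_right h.symm
  have hJneg : ∀ x, J₀ (-x) = - J₀ x := fun x => by
    have h := hJa x (-x); rw [add_neg_cancel, hJ0] at h
    exact eq_neg_of_add_eq_zero_right h.symm
  have hDsub : ∀ x y, D (x - y) = D x - D y := fun x y => by
    rw [sub_eq_add_neg, hDa, hDneg, sub_eq_add_neg]
  have hFsub : ∀ x y, F (x - y) = F x - F y := fun x y => by
    rw [sub_eq_add_neg, hFa, hFneg, sub_eq_add_neg]
  have hJsub : ∀ x y, J₀ (x - y) = J₀ x - J₀ y := fun x y => by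
    rw [sub_eq_add_neg, hJa, hJneg, sub_eq_add_neg]
  -- phi linearity
  have pal := h₀.phi_add_left
  have psl := h₀.phi_smul_left
  have psym := h₀.phi_symm
  have p0l : ∀ y, φ₀ 0 y = 0 := fun y => by simpa using psl 0 0 y
  have p0r : ∀ x, φ₀ x 0 = 0 := fun x => by rw [psym]; exact p0l x
  have par : ∀ x y z, φ₀ x (y + z) = φ₀ x y + φ₀ x z := fun x y z => by
    rw [psym, pal, psym y x, psym z x]
  have psr : ∀ (c : ℝ) (x y : V), φ₀ x (c • y) = c * φ₀ x y := fun c x y => by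
    rw [psym, psl, psym y x]
  have pnl : ∀ x y, φ₀ (-x) y = - φ₀ x y := fun x y => by
    have h := pal x (-x) y; rw [add_neg_cancel, p0l] at h; linarith
  have pnr : ∀ x y, φ₀ x (-y) = - φ₀ x y := fun x y => by
    rw [psym, pnl, psym]
  have psubl : ∀ x y z, φ₀ (x - y) z = φ₀ x z - φ₀ y z := fun x y z => by
    rw [sub_eq_add_neg, pal, pnl]; ring
  have psubr : ∀ x y z, φ₀ x (y - z) = φ₀ x y - φ₀ x z := fun x y z => by
    rw [psym, psubl, psym y x, psym z x]
  -- bracket linearity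
  have bal := h₀.br_add_left
  have bsl := h₀.br_smul_left
  have bsk := h₀.br_skew
  have b0l : ∀ y, br₀ 0 y = 0 := fun y => by simpa using bsl 0 0 y
  have b0r : ∀ x, br₀ x 0 = 0 := fun x => by rw [bsk, b0l, neg_zero]
  have bar : ∀ x y z, br₀ x (y + z) = br₀ x y + br₀ x z := fun x y z => by
    linear_combination (norm := module) bsk x (y + z) - bal y z x - bsk x y - bsk x z
  have bsr : ∀ (c : ℝ) (x y : V), br₀ x (c • y) = c • br₀ x y := fun c x y => by
    linear_combination (norm := module) bsk x (c • y) - bsl c y x - c • bsk x y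
  have bnl : ∀ x y, br₀ (-x) y = - br₀ x y := fun x y => by
    have h := bal x (-x) y; rw [add_neg_cancel, b0l] at h
    exact eq_neg_of_add_eq_zero_right h.symm
  have bnr : ∀ x y, br₀ x (-y) = - br₀ x y := fun x y => by
    rw [bsk, bnl, bsk x y, neg_neg]
  have bsubl : ∀ x y z, br₀ (x - y) z = br₀ x z - br₀ y z := fun x y z => by
    rw [sub_eq_add_neg, bal, bnl, sub_eq_add_neg]
  have bsubr : ∀ x y z, br₀ x (y - z) = br₀ x y - br₀ x z := fun x y z => by
    rw [sub_eq_add_neg, bar, bnr, sub_eq_add_neg]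
  -- invariance variants
  have inv := h₀.phi_invariant
  have inv2 : ∀ x y z, φ₀ x (br₀ y z) = φ₀ (br₀ x y) z := fun x y z => by
    have h := inv y x z
    have h2 := bsk y x
    rw [h2, pnl] at h; linarith
  -- more derived lemmas
  have hJq := h₀.J_sq
  have pherm := h₀.phi_hermitian
  have hFDr : ∀ x, F (D x) = br₀ s₀ x + D (F x) := fun x => by
    have h := hFD x; linear_combination (norm := module) h
  have pcyc : ∀ u a b, φ₀ u (br₀ a b) = φ₀ b (br₀ u a) := fun u a b => by
    rw [inv2, psym]
  have pbr_s : ∀ a b, φ₀ a (br₀ s₀ b) = φ₀ s₀ (br₀ b a) := fun a b => by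
    rw [pcyc s₀ b a]
  have pFd : ∀ a b c, φ₀ a (F (br₀ b c)) = φ₀ a (br₀ (F b) c) + φ₀ a (br₀ b (F c)) :=
    fun a b c => by rw [hFd, par]
  have pDd : ∀ a b c, φ₀ a (D (br₀ b c)) = φ₀ a (br₀ (D b) c) + φ₀ a (br₀ b (D c)) :=
    fun a b c => by rw [hDd, par]
  have pFD : ∀ a b, φ₀ a (F (D b)) = φ₀ a (D (F b)) + φ₀ a (br₀ s₀ b) := fun a b => by
    rw [hFDr, par]; ring
  have key : ∀ a b, φ₀ (F a) (D b) = φ₀ (F b) (D a) - φ₀ a (br₀ s₀ b) := fun a b => by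
    have t1 := hFsk a (D b)
    have t2 := pFD a b
    have t3 := hDsk a (F b)
    have t4 := psym (D a) (F b)
    linarith
  have keyF : ∀ a b c,
      φ₀ (F a) (br₀ b c) + φ₀ (F b) (br₀ c a) + φ₀ (F c) (br₀ a b) = 0 := fun a b c => by
    have t1 := hFsk a (br₀ b c)
    have t2 := pFd a b c
    have t3 := pcyc a (F b) c
    have t4 := pcyc c a (F b)
    have t5 := pcyc a b (F c)
    linarith
  have keyD : ∀ a b c,
      φ₀ (D a) (br₀ b c) + φ₀ (D b) (br₀ c a) + φ₀ (D c) (br₀ a b) = 0 := fun a b c => by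
    have t1 := hDsk a (br₀ b c)
    have t2 := pDd a b c
    have t3 := pcyc a (D b) c
    have t4 := pcyc c a (D b)
    have t5 := pcyc a b (D c)
    linarith
  have hJc' : ∀ x, F (J₀ x) + J₀ (D (J₀ x)) = J₀ (F x) - D x := fun x => by
    rw [hJc x, hJq (D x), ← sub_eq_add_neg]
  have hJc2 : ∀ y, J₀ (F (J₀ y)) - D (J₀ y) = - F y - J₀ (D y) := fun y => by
    have h := congrArg J₀ (hJc' y)
    rw [hJa, hJsub, hJq, hJq] at h
    linear_combination (norm := module) h
  have pJr : ∀ a b, φ₀ a (J₀ b) = - φ₀ (J₀ a) b := fun a b => by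
    have h := pherm (J₀ a) b
    rw [hJq a, pnl] at h; linarith
  have hJc2p : ∀ x y, φ₀ (J₀ (F (J₀ x))) y - φ₀ (D (J₀ x)) y
      = - φ₀ (F x) y - φ₀ (J₀ (D x)) y := fun x y => by
    have h := congrArg (fun t => φ₀ t y) (hJc2 x)
    simpa [psubl, pnl] using h
  have hJc'p : ∀ x y, φ₀ (F (J₀ x)) y + φ₀ (J₀ (D (J₀ x))) y
      = φ₀ (J₀ (F x)) y - φ₀ (D x) y := fun x y => by
    have h := congrArg (fun t => φ₀ t y) (hJc' x)
    simpa [psubl, pal] using h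
  refine ⟨?_, ?_, ?_, ?_, ?_, ?_, ?_, ?_, ?_, ?_, ?_, ?_, ?_, ?_⟩

  · rintro ⟨a1,b1,x,c1,d1⟩ ⟨a2,b2,y,c2,d2⟩ ⟨a3,b3,w,c3,d3⟩
    simp only [extBr, extJ, extPhi, Prod.mk.injEq, Prod.fst_add, Prod.snd_add, Prod.smul_fst, Prod.smul_snd, Prod.fst_neg, Prod.snd_neg, Prod.fst_sub, Prod.snd_sub, Prod.fst_zero, Prod.snd_zero, Prod.mk_add_mk, Prod.smul_mk, Prod.neg_mk, Prod.mk_sub_mk, Prod.mk_eq_zero, smul_eq_mul, hDa, hDs, hDneg, hDsub, hD0, hFa, hFs, hFneg, hFsub, hF0, hJa, hJs, hJneg, hJsub, hJ0, hJq, pal, psl, par, psr, pnl, pnr, psubl, psubr, p0l, p0r, bal, bsl, bar, bsr, bnl, bnr, bsubl, bsubr, b0l, b0r, hFd, hDd, hFDr, mul_zero, zero_mul, mul_one, one_mul, add_zero, zero_add, smul_zero, zero_smul, one_smul, neg_zero, sub_zero, zero_sub, neg_neg, and_true, true_and]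
    refine ⟨by ring, by ring, by module⟩
  · rintro r ⟨a1,b1,x,c1,d1⟩ ⟨a3,b3,w,c3,d3⟩
    simp only [extBr, extJ, extPhi, Prod.mk.injEq, Prod.fst_add, Prod.snd_add, Prod.smul_fst, Prod.smul_snd, Prod.fst_neg, Prod.snd_neg, Prod.fst_sub, Prod.snd_sub, Prod.fst_zero, Prod.snd_zero, Prod.mk_add_mk, Prod.smul_mk, Prod.neg_mk, Prod.mk_sub_mk, Prod.mk_eq_zero, smul_eq_mul, hDa, hDs, hDneg, hDsub, hD0, hFa, hFs, hFneg, hFsub, hF0, hJa, hJs, hJneg, hJsub, hJ0, hJq, pal, psl, par, psr, pnl, pnr, psubl, psubr, p0l, p0r, bal, bsl, bar, bsr, bnl, bnr, bsubl, bsubr, b0l, b0r, hFd, hDd, hFDr, mul_zero, zero_mul, mul_one, one_mul, add_zero, zero_add, smul_zero, zero_smul, one_smul, neg_zero, sub_zero, zero_sub, neg_neg, and_true, true_and]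
    refine ⟨by ring, by ring, by module⟩
  · rintro ⟨a1,b1,x,c1,d1⟩ ⟨a2,b2,y,c2,d2⟩
    simp only [extBr, extJ, extPhi, Prod.mk.injEq, Prod.fst_add, Prod.snd_add, Prod.smul_fst, Prod.smul_snd, Prod.fst_neg, Prod.snd_neg, Prod.fst_sub, Prod.snd_sub, Prod.fst_zero, Prod.snd_zero, Prod.mk_add_mk, Prod.smul_mk, Prod.neg_mk, Prod.mk_sub_mk, Prod.mk_eq_zero, smul_eq_mul, hDa, hDs, hDneg, hDsub, hD0, hFa, hFs, hFneg, hFsub, hF0, hJa, hJs, hJneg, hJsub, hJ0, hJq, pal, psl, par, psr, pnl, pnr, psubl, psubr, p0l, p0r, bal, bsl, bar, bsr, bnl, bnr, bsubl, bsubr, b0l, b0r, hFd, hDd, hFDr, mul_zero, zero_mul, mul_one, one_mul, add_zero, zero_add, smul_zero, zero_smul, one_smul, neg_zero, sub_zero, zero_sub, neg_neg, and_true, true_and]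
    refine ⟨?_, ?_, ?_⟩
    · linear_combination hFsk y x - psym y (F x)
    · linear_combination hDsk y x - psym y (D x)
    · linear_combination (norm := module) bsk x y
  · rintro ⟨a1,b1,x,c1,d1⟩ ⟨a2,b2,y,c2,d2⟩ ⟨a3,b3,w,c3,d3⟩
    simp only [extBr, extJ, extPhi, Prod.mk.injEq, Prod.fst_add, Prod.snd_add, Prod.smul_fst, Prod.smul_snd, Prod.fst_neg, Prod.snd_neg, Prod.fst_sub, Prod.snd_sub, Prod.fst_zero, Prod.snd_zero, Prod.mk_add_mk, Prod.smul_mk, Prod.neg_mk, Prod.mk_sub_mk, Prod.mk_eq_zero, smul_eq_mul, hDa, hDs, hDneg, hDsub, hD0, hFa, hFs, hFneg, hFsub, hF0, hJa, hJs, hJneg, hJsub, hJ0, hJq, pal, psl, par, psr, pnl, pnr, psubl, psubr, p0l, p0r, bal, bsl, bar, bsr, bnl, bnr, bsubl, bsubr, b0l, b0r, hFd, hDd, hFDr, mul_zero, zero_mul, mul_one, one_mul, add_zero, zero_add, smul_zero, zero_smul, one_smul, neg_zero, sub_zero, zero_sub, neg_neg, and_true, true_and]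
    refine ⟨?_, ?_, ?_⟩
    · linear_combination keyF x y w
        + d2 * psym (F x) (F w) + d3 * psym (F y) (F x) + d1 * psym (F w) (F y)
        + (d2*c3 - c2*d3) * psym (F x) s₀ + (d3*c1 - c3*d1) * psym (F y) s₀
        + (d1*c2 - c1*d2) * psym (F w) s₀
        + c2 * key x w + c3 * key y x + c1 * key w y
        - c2 * pbr_s x w - c3 * pbr_s y x - c1 * pbr_s w y
    · linear_combination keyD x y w
        + c2 * psym (D x) (D w) + c3 * psym (D y) (D x) + c1 * psym (D w) (D y)
        + (d2*c3 - c2*d3) * psym (D x) s₀ + (d3*c1 - c3*d1) * psym (D y) s₀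
        + (d1*c2 - c1*d2) * psym (D w) s₀
        + d2 * (psym (D x) (F w) - psym (D w) (F x) - key x w)
        + d3 * (psym (D y) (F x) - psym (D x) (F y) - key y x)
        + d1 * (psym (D w) (F y) - psym (D y) (F w) - key w y)
        + d2 * pbr_s x w + d3 * pbr_s y x + d1 * pbr_s w y
    · linear_combination (norm := module) h₀.jacobi x y w
        + d2 • bsk x (F w) + d3 • bsk y (F x) + d1 • bsk w (F y)
        + c2 • bsk x (D w) + c3 • bsk y (D x) + c1 • bsk w (D y)
        + (d2*c3 - c2*d3) • bsk x s₀ + (d3*c1 - c3*d1) • bsk y s₀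
        + (d1*c2 - c1*d2) • bsk w s₀
  · rintro ⟨a1,b1,x,c1,d1⟩ ⟨a2,b2,y,c2,d2⟩
    simp only [extBr, extJ, extPhi, Prod.mk.injEq, Prod.fst_add, Prod.snd_add, Prod.smul_fst, Prod.smul_snd, Prod.fst_neg, Prod.snd_neg, Prod.fst_sub, Prod.snd_sub, Prod.fst_zero, Prod.snd_zero, Prod.mk_add_mk, Prod.smul_mk, Prod.neg_mk, Prod.mk_sub_mk, Prod.mk_eq_zero, smul_eq_mul, hDa, hDs, hDneg, hDsub, hD0, hFa, hFs, hFneg, hFsub, hF0, hJa, hJs, hJneg, hJsub, hJ0, hJq, pal, psl, par, psr, pnl, pnr, psubl, psubr, p0l, p0r, bal, bsl, bar, bsr, bnl, bnr, bsubl, bsubr, b0l, b0r, hFd, hDd, hFDr, mul_zero, zero_mul, mul_one, one_mul, add_zero, zero_add, smul_zero, zero_smul, one_smul, neg_zero, sub_zero, zero_sub, neg_neg, and_true, true_and]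
    and_intros <;> first | rfl | ring | module
  · rintro r ⟨a1,b1,x,c1,d1⟩
    simp only [extBr, extJ, extPhi, Prod.mk.injEq, Prod.fst_add, Prod.snd_add, Prod.smul_fst, Prod.smul_snd, Prod.fst_neg, Prod.snd_neg, Prod.fst_sub, Prod.snd_sub, Prod.fst_zero, Prod.snd_zero, Prod.mk_add_mk, Prod.smul_mk, Prod.neg_mk, Prod.mk_sub_mk, Prod.mk_eq_zero, smul_eq_mul, hDa, hDs, hDneg, hDsub, hD0, hFa, hFs, hFneg, hFsub, hF0, hJa, hJs, hJneg, hJsub, hJ0, hJq, pal, psl, par, psr, pnl, pnr, psubl, psubr, p0l, p0r, bal, bsl, bar, bsr, bnl, bnr, bsubl, bsubr, b0l, b0r, hFd, hDd, hFDr, mul_zero, zero_mul, mul_one, one_mul, add_zero, zero_add, smul_zero, zero_smul, one_smul, neg_zero, sub_zero, zero_sub, neg_neg, and_true, true_and]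
    and_intros <;> first | rfl | ring | module
  · rintro ⟨a1,b1,x,c1,d1⟩
    simp only [extBr, extJ, extPhi, Prod.mk.injEq, Prod.fst_add, Prod.snd_add, Prod.smul_fst, Prod.smul_snd, Prod.fst_neg, Prod.snd_neg, Prod.fst_sub, Prod.snd_sub, Prod.fst_zero, Prod.snd_zero, Prod.mk_add_mk, Prod.smul_mk, Prod.neg_mk, Prod.mk_sub_mk, Prod.mk_eq_zero, smul_eq_mul, hDa, hDs, hDneg, hDsub, hD0, hFa, hFs, hFneg, hFsub, hF0, hJa, hJs, hJneg, hJsub, hJ0, hJq, pal, psl, par, psr, pnl, pnr, psubl, psubr, p0l, p0r, bal, bsl, bar, bsr, bnl, bnr, bsubl, bsubr, b0l, b0r, hFd, hDd, hFDr, mul_zero, zero_mul, mul_one, one_mul, add_zero, zero_add, smul_zero, zero_smul, one_smul, neg_zero, sub_zero, zero_sub, neg_neg, and_true, true_and]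
  · rintro ⟨a1,b1,x,c1,d1⟩ ⟨a2,b2,y,c2,d2⟩
    simp only [extBr, extJ, extPhi, Prod.mk.injEq, Prod.fst_add, Prod.snd_add, Prod.smul_fst, Prod.smul_snd, Prod.fst_neg, Prod.snd_neg, Prod.fst_sub, Prod.snd_sub, Prod.fst_zero, Prod.snd_zero, Prod.mk_add_mk, Prod.smul_mk, Prod.neg_mk, Prod.mk_sub_mk, Prod.mk_eq_zero, smul_eq_mul, hDa, hDs, hDneg, hDsub, hD0, hFa, hFs, hFneg, hFsub, hF0, hJa, hJs, hJneg, hJsub, hJ0, hJq, pal, psl, par, psr, pnl, pnr, psubl, psubr, p0l, p0r, bal, bsl, bar, bsr, bnl, bnr, bsubl, bsubr, b0l, b0r, hFd, hDd, hFDr, mul_zero, zero_mul, mul_one, one_mul, add_zero, zero_add, smul_zero, zero_smul, one_smul, neg_zero, sub_zero, zero_sub, neg_neg, and_true, true_and]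
    refine ⟨?_, ?_, ?_⟩
    · linear_combination hJc2p x y - pJr (D x) y - pJr (F (J₀ x)) y
    · linear_combination hJc'p x y + pJr (F x) y - pJr (D (J₀ x)) y
    · linear_combination (norm := module) h₀.integrable x y
        + d1 • hJc2 y - d2 • hJc2 x + c1 • hJc' y - c2 • hJc' x
  · rintro ⟨a1,b1,x,c1,d1⟩ ⟨a2,b2,y,c2,d2⟩ ⟨a3,b3,w,c3,d3⟩
    simp only [extBr, extJ, extPhi, Prod.mk.injEq, Prod.fst_add, Prod.snd_add, Prod.smul_fst, Prod.smul_snd, Prod.fst_neg, Prod.snd_neg, Prod.fst_sub, Prod.snd_sub, Prod.fst_zero, Prod.snd_zero, Prod.mk_add_mk, Prod.smul_mk, Prod.neg_mk, Prod.mk_sub_mk, Prod.mk_eq_zero, smul_eq_mul, hDa, hDs, hDneg, hDsub, hD0, hFa, hFs, hFneg, hFsub, hF0, hJa, hJs, hJneg, hJsub, hJ0, hJq, pal, psl, par, psr, pnl, pnr, psubl, psubr, p0l, p0r, bal, bsl, bar, bsr, bnl, bnr, bsubl, bsubr, b0l, b0r, hFd, hDd, hFDr, mul_zero, zero_mul,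 mul_one, one_mul, add_zero, zero_add, smul_zero, zero_smul, one_smul, neg_zero, sub_zero, zero_sub, neg_neg, and_true, true_and]
    ring
  · rintro r ⟨a1,b1,x,c1,d1⟩ ⟨a3,b3,w,c3,d3⟩
    simp only [extBr, extJ, extPhi, Prod.mk.injEq, Prod.fst_add, Prod.snd_add, Prod.smul_fst, Prod.smul_snd, Prod.fst_neg, Prod.snd_neg, Prod.fst_sub, Prod.snd_sub, Prod.fst_zero, Prod.snd_zero, Prod.mk_add_mk, Prod.smul_mk, Prod.neg_mk, Prod.mk_sub_mk, Prod.mk_eq_zero, smul_eq_mul, hDa, hDs, hDneg, hDsub, hD0, hFa, hFs, hFneg, hFsub, hF0, hJa, hJs, hJneg, hJsub, hJ0, hJq, pal, psl, par, psr, pnl, pnr, psubl, psubr, p0l, p0r, bal, bsl, bar, bsr, bnl, bnr, bsubl, bsubr, b0l, b0r, hFd, hDd, hFDr, mul_zero, zero_mul, mul_one, one_mul, add_zero, zero_add, smul_zero, zero_smul, one_smul, neg_zero, sub_zero, zero_sub, neg_neg, and_true, true_and]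
    ring
  · rintro ⟨a1,b1,x,c1,d1⟩ ⟨a2,b2,y,c2,d2⟩
    simp only [extBr, extJ, extPhi, Prod.mk.injEq, Prod.fst_add, Prod.snd_add, Prod.smul_fst, Prod.smul_snd, Prod.fst_neg, Prod.snd_neg, Prod.fst_sub, Prod.snd_sub, Prod.fst_zero, Prod.snd_zero, Prod.mk_add_mk, Prod.smul_mk, Prod.neg_mk, Prod.mk_sub_mk, Prod.mk_eq_zero, smul_eq_mul, hDa, hDs, hDneg, hDsub, hD0, hFa, hFs, hFneg, hFsub, hF0, hJa, hJs, hJneg, hJsub, hJ0, hJq, pal, psl, par, psr, pnl, pnr, psubl, psubr, p0l, p0r, bal, bsl, bar, bsr, bnl, bnr, bsubl, bsubr, b0l, b0r, hFd, hDd, hFDr, mul_zero, zero_mul, mul_one, one_mul, add_zero, zero_add, smul_zero, zero_smul, one_smul, neg_zero, sub_zero, zero_sub, neg_neg, and_true, true_and]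
    linear_combination psym x y
  · rintro ⟨a1,b1,x,c1,d1⟩ h
    have h1 := h (1,0,0,0,0)
    have h2 := h (0,1,0,0,0)
    have h3 := h (0,0,0,1,0)
    have h4 := h (0,0,0,0,1)
    simp only [extBr, extJ, extPhi, Prod.mk.injEq, Prod.fst_add, Prod.snd_add, Prod.smul_fst, Prod.smul_snd, Prod.fst_neg, Prod.snd_neg, Prod.fst_sub, Prod.snd_sub, Prod.fst_zero, Prod.snd_zero, Prod.mk_add_mk, Prod.smul_mk, Prod.neg_mk, Prod.mk_sub_mk, Prod.mk_eq_zero, smul_eq_mul, hDa, hDs, hDneg, hDsub, hD0, hFa, hFs, hFneg, hFsub, hF0, hJa, hJs, hJneg, hJsub, hJ0, hJq, pal, psl, par, psr, pnl, pnr, psubl, psubr, p0l, p0r, bal, bsl, bar, bsr, bnl, bnr, bsubl, bsubr, b0l, b0r, hFd, hDd, hFDr, mul_zero, zero_mul, mul_one, one_mul, add_zero, zero_add, smul_zero, zero_smul, one_smul, neg_zero, sub_zero, zero_sub, neg_neg, and_true, true_and] at h1 h2 h3 h4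
    have hx : x = 0 := h₀.phi_nondeg x (fun y => by
      have h5 := h (0,0,y,0,0)
      simp only [extBr, extJ, extPhi, Prod.mk.injEq, Prod.fst_add, Prod.snd_add, Prod.smul_fst, Prod.smul_snd, Prod.fst_neg, Prod.snd_neg, Prod.fst_sub, Prod.snd_sub, Prod.fst_zero, Prod.snd_zero, Prod.mk_add_mk, Prod.smul_mk, Prod.neg_mk, Prod.mk_sub_mk, Prod.mk_eq_zero, smul_eq_mul, hDa, hDs, hDneg, hDsub, hD0, hFa, hFs, hFneg, hFsub, hF0, hJa, hJs, hJneg, hJsub, hJ0, hJq, pal, psl, par, psr, pnl, pnr, psubl, psubr, p0l, p0r, bal, bsl, bar, bsr, bnl, bnr, bsubl, bsubr, b0l, b0r, hFd, hDd, hFDr, mul_zero, zero_mul, mul_one, one_mul, add_zero, zero_add, smul_zero, zero_smul, one_smul, neg_zero, sub_zero, zero_sub, neg_neg, and_true, true_and] at h5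
      linarith)
    simp only [Prod.mk_eq_zero]
    refine ⟨by linarith, by linarith, hx, by linarith, by linarith⟩
  · rintro ⟨a1,b1,x,c1,d1⟩ ⟨a2,b2,y,c2,d2⟩ ⟨a3,b3,w,c3,d3⟩
    simp only [extBr, extJ, extPhi, Prod.mk.injEq, Prod.fst_add, Prod.snd_add, Prod.smul_fst, Prod.smul_snd, Prod.fst_neg, Prod.snd_neg, Prod.fst_sub, Prod.snd_sub, Prod.fst_zero, Prod.snd_zero, Prod.mk_add_mk, Prod.smul_mk, Prod.neg_mk, Prod.mk_sub_mk, Prod.mk_eq_zero, smul_eq_mul, hDa, hDs, hDneg, hDsub, hD0, hFa, hFs, hFneg, hFsub, hF0, hJa, hJs, hJneg, hJsub, hJ0, hJq, pal, psl, par, psr, pnl, pnr, psubl, psubr, p0l, p0r, bal, bsl, bar, bsr, bnl, bnr, bsubl, bsubr, b0l, b0r, hFd, hDd, hFDr, mul_zero, zero_mul, mul_one, one_mul, add_zero, zero_add, smul_zero, zero_smul, one_smul, neg_zero, sub_zero, zero_sub, neg_neg, and_true, true_and]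
    linear_combination inv x y w + d3 * psym (F x) y + c3 * psym (D x) y
      + (d1*c3 - c1*d3) * psym y s₀ + d1 * hFsk y w + c1 * hDsk y w
  · rintro ⟨a1,b1,x,c1,d1⟩ ⟨a2,b2,y,c2,d2⟩
    simp only [extBr, extJ, extPhi, Prod.mk.injEq, Prod.fst_add, Prod.snd_add, Prod.smul_fst, Prod.smul_snd, Prod.fst_neg, Prod.snd_neg, Prod.fst_sub, Prod.snd_sub, Prod.fst_zero, Prod.snd_zero, Prod.mk_add_mk, Prod.smul_mk, Prod.neg_mk, Prod.mk_sub_mk, Prod.mk_eq_zero, smul_eq_mul, hDa, hDs, hDneg, hDsub, hD0, hFa, hFs, hFneg, hFsub, hF0, hJa, hJs, hJneg, hJsub, hJ0, hJq, pal, psl, par, psr, pnl, pnr, psubl, psubr, p0l, p0r, bal, bsl, bar, bsr, bnl, bnr, bsubl, bsubr, b0l, b0r, hFd, hDd, hFDr, mul_zero, zero_mul, mul_one, one_mul, add_zero, zero_add, smul_zero, zero_smul, one_smul, neg_zero, sub_zero, zero_sub, neg_neg, pherm]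
    ring
end
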